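/- arXiv:1602.01298 — 2 statements merged into one kernel-verified Lean document; each statement's English description precedes it below -/
import Mathlib

section
/- For every n ≥ 3, the graph K_{n,n} minus a perfect matching has no b-coloring with k colors for any 2 < k < n; in particular, for n ≥ 4 this graph is not b-continuous. -/
def IsBVertex {V : Type*} (G : SimpleGraph V) {k : ℕ} (ψ : V → Fin k) (u : V) : Prop :=
  ∀ c : Fin k, c ≠ ψ u → ∃ v, G.Adj u v ∧ ψ v = c

def IsBColoring {V : Type*} (G : SimpleGraph V) (k : ℕ) (ψ : V → Fin k) : Prop :=
  (∀ u v, G.Adj u v → ψ u ≠ ψ v) ∧ ∀ c : Fin k, ∃ u, ψ u = c ∧ IsBVertex G ψ u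

noncomputable def bChromaticNumber {V : Type*} [Fintype V] (G : SimpleGraph V) : ℕ :=
  sSup {k | ∃ ψ : V → Fin k, IsBColoring G k ψ}

/-- `K_{n,n}` minus a perfect matching: `a i` is adjacent to `b j` iff `i ≠ j`. -/
def crownGraph (n : ℕ) : SimpleGraph (Fin n ⊕ Fin n) where
  Adj x y := ∃ i j : Fin n, i ≠ j ∧
    ((x = Sum.inl i ∧ y = Sum.inr j) ∨ (x = Sum.inr j ∧ y = Sum.inl i))
  symm := by
    constructor
    rintro x y ⟨i, j, hij, h | h⟩ <;> exact ⟨i, j, hij, by tauto⟩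
  loopless := by
    constructor
    rintro x ⟨i, j, hij, ⟨h1, h2⟩ | ⟨h1, h2⟩⟩ <;> simp_all

/-!
A color class of a proper coloring of the crown graph that meets both sides is a pair
`{a i, b i}`, so with `k < n` colors some color `c` lives on one side only. If `u` is a b-vertex
of color `c`, the color `d` of its partner `u.swap` then lives on the other side only, and a
b-vertex of a third color would need neighbours of colors `c` and `d`, all on the side opposite
to its own. Since the graph is bipartite and coloring `a i` and `b i` by `i` is a b-coloring with
`n` colors, for `n ≥ 4` the value `k = 3` is skipped.
-/

section BColoring

variable {V : Type*} {G : SimpleGraph V} {k : ℕ} {ψ : V → Fin k}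

theorem IsBColoring.le_card [Fintype V] (hψ : IsBColoring G k ψ) : k ≤ Fintype.card V := by
  choose f hf using hψ.2
  have hf_inj : Function.Injective f := fun c c' h => by rw [← (hf c).1, ← (hf c').1, h]
  simpa using Fintype.card_le_of_injective f hf_inj

theorem IsBColoring.le_bChromaticNumber [Fintype V] (hψ : IsBColoring G k ψ) :
    k ≤ bChromaticNumber G :=
  le_csSup ⟨Fintype.card V, fun _ ⟨_, h⟩ => h.le_card⟩ ⟨ψ, hψ⟩

theorem IsBColoring.false_of_confined_to_opposite_sides (hk : 2 < k)
    (hψ : IsBColoring G k ψ) (s : G.Coloring Bool) {c d : Fin k} (b : Bool)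
    (hc : ∀ v, ψ v = c → s v = b) (hd : ∀ v, ψ v = d → s v ≠ b) : False := by
  obtain ⟨e, hec, hed⟩ := ENat.exists_ne_ne_of_three_le (by simpa using hk.nat_succ_le) c d
  obtain ⟨w, rfl, hw⟩ := hψ.2 e
  by_cases hsw : s w = b
  · obtain ⟨v, hwv, hv⟩ := hw c hec.symm
    exact s.valid hwv (hsw.trans (hc v hv).symm)
  · obtain ⟨v, hwv, hv⟩ := hw d hed.symm
    exact s.valid hwv ((Bool.eq_not.2 hsw).trans (Bool.eq_not.2 (hd v hv)).symm)

end BColoring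

theorem Sum.isLeft_swap_ne {α β : Type*} (x : α ⊕ β) : x.swap.isLeft ≠ x.isLeft := by
  cases x <;> simp

namespace crownGraph

variable {n : ℕ}

theorem adj_iff {x y : Fin n ⊕ Fin n} :
    (crownGraph n).Adj x y ↔ x.isLeft ≠ y.isLeft ∧ y ≠ x.swap := by
  rcases x with i | i <;> rcases y with j | j <;> simp [crownGraph, eq_comm]

def sideColoring (n : ℕ) : (crownGraph n).Coloring Bool :=
  SimpleGraph.Coloring.mk Sum.isLeft fun h => (adj_iff.1 h).1

theorem colorable_two : (crownGraph n).Colorable 2 := (sideColoring n).colorable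

theorem eq_swap_of_color_eq {k : ℕ} {ψ : Fin n ⊕ Fin n → Fin k}
    (hψ : ∀ u v, (crownGraph n).Adj u v → ψ u ≠ ψ v) {x y : Fin n ⊕ Fin n}
    (hxy : x.isLeft ≠ y.isLeft) (h : ψ x = ψ y) : y = x.swap := by
  by_contra hy
  exact hψ x y (adj_iff.2 ⟨hxy, hy⟩) h

theorem isBColoring_elim_id : IsBColoring (crownGraph n) n (Sum.elim id id) := by
  refine ⟨fun u v huv => ?_, fun c => ⟨Sum.inl c, rfl, fun d hd => ⟨Sum.inr d, ?_, rfl⟩⟩⟩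
  · rcases u with i | i <;> rcases v with j | j <;> simp_all [adj_iff, eq_comm]
  · simpa [adj_iff, eq_comm] using hd

theorem exists_color_confined_to_side {k : ℕ} (hkn : k < n) {ψ : Fin n ⊕ Fin n → Fin k}
    (hψ : ∀ u v, (crownGraph n).Adj u v → ψ u ≠ ψ v) :
    ∃ c b, ∀ v, ψ v = c → v.isLeft = b := by
  by_contra! h
  have hinj : Function.Injective (ψ ∘ Sum.inl) := fun i i' hii' => by
    obtain ⟨v, hv, hvl⟩ := h (ψ (Sum.inl i)) true
    have hi := eq_swap_of_color_eq hψ (x := Sum.inl i) (by simpa using hvl) hv.symm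
    have hi' := eq_swap_of_color_eq hψ (x := Sum.inl i') (by simpa using hvl) (hv.trans hii').symm
    simpa using hi.symm.trans hi'
  have := Fintype.card_le_of_injective _ hinj
  simp only [Fintype.card_fin] at this
  omega

theorem not_isBColoring {k : ℕ} (hk : 2 < k) (hkn : k < n) (ψ : Fin n ⊕ Fin n → Fin k) :
    ¬ IsBColoring (crownGraph n) k ψ := by
  intro hψ
  obtain ⟨c, b, hc⟩ := exists_color_confined_to_side hkn hψ.1
  obtain ⟨u, hu, -⟩ := hψ.2 c
  have hub : u.isLeft = b := hc u hu
  have hsw : u.swap.isLeft ≠ b := hub ▸ Sum.isLeft_swap_ne u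
  have hd : ∀ v, ψ v = ψ u.swap → v.isLeft ≠ b := by
    intro v hv hvb
    have hvu : v = u := by simpa using eq_swap_of_color_eq hψ.1 (hvb ▸ hsw) hv.symm
    exact hsw (hc u.swap (by rw [← hv, hvu, hu]))
  exact hψ.false_of_confined_to_opposite_sides hk (sideColoring n) b hc hd

end crownGraph

theorem stmt15_general (n : ℕ) :
    (∀ k : ℕ, 2 < k → k < n →
      ¬ ∃ ψ : (Fin n ⊕ Fin n) → Fin k, IsBColoring (crownGraph n) k ψ) ∧
    (4 ≤ n → ¬ ∀ k : ℕ, (crownGraph n).chromaticNumber ≤ (k : ℕ∞) →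
      k ≤ bChromaticNumber (crownGraph n) →
      ∃ ψ : (Fin n ⊕ Fin n) → Fin k, IsBColoring (crownGraph n) k ψ) := by
  refine ⟨fun k hk hkn ⟨ψ, hψ⟩ => crownGraph.not_isBColoring hk hkn ψ hψ, fun hn hcont => ?_⟩
  have hχ : (crownGraph n).chromaticNumber ≤ (3 : ℕ) :=
    (crownGraph.colorable_two.mono (by norm_num)).chromaticNumber_le
  have hb : 3 ≤ bChromaticNumber (crownGraph n) :=
    (by omega : 3 ≤ n).trans crownGraph.isBColoring_elim_id.le_bChromaticNumber
  obtain ⟨ψ, hψ⟩ := hcont 3 hχ hb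
  exact crownGraph.not_isBColoring (by norm_num) (by omega) ψ hψ

theorem stmt15 (n : ℕ) (hn : 3 ≤ n) :
    (∀ k : ℕ, 2 < k → k < n →
      ¬ ∃ ψ : (Fin n ⊕ Fin n) → Fin k, IsBColoring (crownGraph n) k ψ) ∧
    (4 ≤ n → ¬ ∀ k : ℕ, (crownGraph n).chromaticNumber ≤ (k : ℕ∞) →
      k ≤ bChromaticNumber (crownGraph n) →
      ∃ ψ : (Fin n ⊕ Fin n) → Fin k, IsBColoring (crownGraph n) k ψ) :=
  stmt15_general n
end

section
/- If G is a graph with girth at least 5, ψ is a minimal b-coloring of G with k colors, and u is a b-vertex such that at most one color class (other than ψ(u)) has no b-vertex adjacent to u, then u is a (k−1)-iris, i.e., u has at least k−2 neighbors of degree at least k−2. -/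
def MinimalBColoring {V : Type*} (G : SimpleGraph V) (k : ℕ) (ψ : V → Fin k) : Prop :=
  IsBColoring G k ψ ∧ ∀ φ : V → Fin k, IsBColoring G k φ →
    {u | IsBVertex G ψ u}.ncard ≤ {u | IsBVertex G φ u}.ncard

def IsKIris {V : Type*} (G : SimpleGraph V) (k : ℕ) (u : V) : Prop :=
  ∃ S : Finset V, (↑S : Set V) ⊆ G.neighborSet u ∧
    (∀ v ∈ S, k - 1 ≤ (G.neighborSet v).ncard) ∧ S.card = k - 1

/-!
A b-vertex sees all `k - 1` other colours among its neighbours, so it has degree at least `k - 1`.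
By hypothesis, `u` has b-vertex neighbours of at least `k - 2` distinct colours; these are `k - 2`
distinct neighbours, each of degree at least `k - 1`.
-/

section

variable {V : Type*} {G : SimpleGraph V}

lemma ncard_compl_singleton_fin {k : ℕ} (c : Fin k) : ({c}ᶜ : Set (Fin k)).ncard = k - 1 := by
  rw [Set.ncard_compl, Set.ncard_singleton, Nat.card_eq_fintype_card, Fintype.card_fin]

lemma IsBVertex.sub_one_le_ncard_neighborSet [Finite V] {k : ℕ} {ψ : V → Fin k} {w : V}
    (hw : IsBVertex G ψ w) : k - 1 ≤ (G.neighborSet w).ncard := by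
  calc k - 1 = ({ψ w}ᶜ : Set (Fin k)).ncard := (ncard_compl_singleton_fin _).symm
    _ ≤ (ψ '' G.neighborSet w).ncard := Set.ncard_le_ncard hw
    _ ≤ (G.neighborSet w).ncard := Set.ncard_image_le

lemma isKIris_of_le_ncard [Finite V] {k : ℕ} {u : V} {T : Set V} (hT : T ⊆ G.neighborSet u)
    (hdeg : ∀ v ∈ T, k - 1 ≤ (G.neighborSet v).ncard) (hcard : k - 1 ≤ T.ncard) :
    IsKIris G k u := by
  obtain ⟨S, hST, hS⟩ := Set.exists_subset_card_eq hcard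
  have hSfin : S.Finite := S.toFinite
  refine ⟨hSfin.toFinset, ?_, ?_, ?_⟩
  · simpa using hST.trans hT
  · intro v hv
    exact hdeg v (hST (hSfin.mem_toFinset.mp hv))
  · rw [← hS, Set.ncard_eq_toFinset_card S hSfin]

end

theorem stmt17_general {V : Type*} [Fintype V] (G : SimpleGraph V)
    (k : ℕ) (ψ : V → Fin k)
    (u : V)
    (h1 : {i : Fin k | i ≠ ψ u ∧ ¬ ∃ w, G.Adj u w ∧ ψ w = i ∧ IsBVertex G ψ w}.ncard ≤ 1) :
    IsKIris G (k - 1) u := by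
  set missing := {i : Fin k | i ≠ ψ u ∧ ¬ ∃ w, G.Adj u w ∧ ψ w = i ∧ IsBVertex G ψ w}
  set bNeighbors := {w | G.Adj u w ∧ IsBVertex G ψ w}
  have hcover : ({ψ u}ᶜ : Set (Fin k)) ⊆ ψ '' bNeighbors ∪ missing := by
    intro c hc
    by_cases hseen : ∃ w, G.Adj u w ∧ ψ w = c ∧ IsBVertex G ψ w
    · obtain ⟨w, hadj, rfl, hw⟩ := hseen
      exact Or.inl ⟨w, ⟨hadj, hw⟩, rfl⟩
    · exact Or.inr ⟨hc, hseen⟩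
  have hcard : k - 1 ≤ bNeighbors.ncard + 1 :=
    calc k - 1 = ({ψ u}ᶜ : Set (Fin k)).ncard := (ncard_compl_singleton_fin _).symm
      _ ≤ (ψ '' bNeighbors ∪ missing).ncard := Set.ncard_le_ncard hcover
      _ ≤ (ψ '' bNeighbors).ncard + missing.ncard := Set.ncard_union_le _ _
      _ ≤ bNeighbors.ncard + 1 := add_le_add Set.ncard_image_le h1
  exact isKIris_of_le_ncard (T := bNeighbors) (fun w hw => hw.1)
    (fun w hw => (Nat.sub_le _ 1).trans hw.2.sub_one_le_ncard_neighborSet) (by omega)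

theorem stmt17 {V : Type*} [Fintype V] (G : SimpleGraph V) (h5 : 5 ≤ G.egirth)
    (k : ℕ) (ψ : V → Fin k) (hmin : MinimalBColoring G k ψ)
    (u : V) (hu : IsBVertex G ψ u)
    (h1 : {i : Fin k | i ≠ ψ u ∧ ¬ ∃ w, G.Adj u w ∧ ψ w = i ∧ IsBVertex G ψ w}.ncard ≤ 1) :
    IsKIris G (k - 1) u :=
  stmt17_general G k ψ u h1
end
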